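/- arXiv:1307.3532 — 2 statements merged into one kernel-verified Lean document; each statement's English description precedes it below -/
import Mathlib

section
/- Let d ≥ 1 and f, g ∈ ℛ_d. The following are equivalent: (a) ann_R(f)_e ⊆ ann_R(g)_e for all e < d; (b) ann_R(f)_{d−1} ⊆ ann_R(g)_{d−1}; (c) there exists a matrix A ∈ Mat_r(K) such that ∂_i g = (A∂)_i(f) for all i = 1,…,r; (d) R_1·ann_R(f)_{d−1} ⊆ ann_R(g)_d; (e) 𝔪_R·ann_R(f) ⊆ ann_R(g), where 𝔪_R = (∂_1,…,∂_r). -/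
open MvPolynomial

namespace Kleppe

noncomputable section

open scoped Classical

variable {K : Type*}

/-- The iterated partial-derivative operator `∂^β` applied to `f`
(in the standard polynomial ring; char 0 identification of divided powers). -/
def derivMulti [CommSemiring K] {r : ℕ} (β : Fin r →₀ ℕ) (f : MvPolynomial (Fin r) K) :
    MvPolynomial (Fin r) K :=
  ∑ α ∈ f.support,
    if β ≤ α then
      MvPolynomial.monomial (α - β)
        ((∏ i : Fin r, (α i).descFactorial (β i)) • MvPolynomial.coeff α f)
    else 0

/-- The apolarity action `D(f)` of a differential operator `D ∈ R = K[∂_1,…,∂_r]`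
on a polynomial `f ∈ ℛ = K[x_1,…,x_r]`; `∂_i` acts as `∂/∂x_i`. -/
def contract [CommSemiring K] {r : ℕ} (D f : MvPolynomial (Fin r) K) :
    MvPolynomial (Fin r) K :=
  ∑ β ∈ D.support, MvPolynomial.coeff β D • derivMulti β f

/-- `(A∂)_i = Σ_k A_{ik} ∂_k`, as an element of `R`. -/
def rowOp [CommSemiring K] {r : ℕ} (A : Matrix (Fin r) (Fin r) K) (i : Fin r) :
    MvPolynomial (Fin r) K :=
  ∑ k : Fin r, A i k • X k

/-- The matrix space `M_f = {A | ∂_i·(A∂)_j − ∂_j·(A∂)_i ∈ ann_R f for all i,j}`. -/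
def Mf [CommRing K] {r : ℕ} (f : MvPolynomial (Fin r) K) :
    Set (Matrix (Fin r) (Fin r) K) :=
  {A | ∀ i j : Fin r, contract (X i * rowOp A j - X j * rowOp A i) f = 0}

/-- `γ_f(A)`: the unique homogeneous `g` of degree `d` with `∂_i g = (A∂)_i (f)` for all `i`
(defined by choice; junk value `0` if no such `g` exists). -/
def gammaf [CommRing K] {r : ℕ} (d : ℕ) (f : MvPolynomial (Fin r) K)
    (A : Matrix (Fin r) (Fin r) K) : MvPolynomial (Fin r) K :=
  if h : ∃ g : MvPolynomial (Fin r) K, g.IsHomogeneous d ∧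
      ∀ i, contract (X i) g = contract (rowOp A i) f then h.choose else 0

/-- `R_e(g)`, the space of contractions of `g` by homogeneous operators of degree `e`. -/
def partials [CommRing K] {r : ℕ} (e : ℕ) (g : MvPolynomial (Fin r) K) :
    Submodule K (MvPolynomial (Fin r) K) :=
  Submodule.span K {p | ∃ D : MvPolynomial (Fin r) K, D.IsHomogeneous e ∧ p = contract D g}

/-- `G` is (the set of components of) a regular splitting of `f`:
`f = Σ_{g ∈ G} g`, each `g` a nonzero degree-`d` form, and the spaces of
`(d−1)`-st partials `R_{d−1}(g)` are independent. -/
def IsRegSplit [CommRing K] {r : ℕ} (d : ℕ) (f : MvPolynomial (Fin r) K)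
    (G : Set (MvPolynomial (Fin r) K)) : Prop :=
  G.Finite ∧ G.Nonempty ∧ (∀ g ∈ G, g ≠ 0 ∧ g.IsHomogeneous d) ∧ (∑ᶠ g ∈ G, g) = f ∧
  ∀ g ∈ G, Disjoint (partials (d - 1) g) (⨆ h ∈ G \ {g}, partials (d - 1) h)

/-- A complete set of orthogonal idempotents in `M_f`. -/
def IsCoid [CommRing K] {r : ℕ} (f : MvPolynomial (Fin r) K)
    (E : Set (Matrix (Fin r) (Fin r) K)) : Prop :=
  E.Finite ∧ E ⊆ Mf f ∧ (∀ A ∈ E, A ≠ 0) ∧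
  (∀ A ∈ E, ∀ B ∈ E, A ≠ B → A * B = 0) ∧ (∑ᶠ A ∈ E, A) = 1

end

/-!
Contraction by `X i` is `pderiv i`, so by Euler's identity a form of positive degree killed by
every `∂_i` vanishes (characteristic zero); iterating, a form of degree `m` killed by all of `R_k`,
`k ≤ m`, vanishes. This nondegeneracy gives (b) ⇒ (a) (test `D(g)` against `R_{d-1-e}`) and
(d) ⇒ (b) (test the linear form `D(g)` against the `∂_i`). For (b) ⇒ (c), the functionals
`D ↦ ∂_i D(g)` on `R_{d-1}` vanish on the common kernel of the functionals `D ↦ ∂_k D(f)`, so they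
are linear combinations of them; the coefficients form `A`, and nondegeneracy in degree `d - 1`
turns the resulting identity of pairings into `∂_i g = (A∂)_i f`. Finally (c) ⇒ (e) because
operators commute: `(∂_i D)(g) = D(∂_i g) = D((A∂)_i f) = (A∂)_i (D(f))`.
-/

section Contraction

variable {K : Type*} [CommSemiring K] {r : ℕ}

theorem coeff_derivMulti (β γ : Fin r →₀ ℕ) (f : MvPolynomial (Fin r) K) :
    coeff γ (derivMulti β f) = (∏ i, (γ i + β i).descFactorial (β i)) • coeff (β + γ) f := by
  rw [derivMulti, coeff_sum, Finset.sum_eq_single (β + γ)]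
  · simp only [le_self_add, if_true, add_tsub_cancel_left, coeff_monomial, Finsupp.add_apply,
      add_comm (β _)]
  · intro α _ hα
    split_ifs with hle
    · rw [coeff_monomial, if_neg]
      rintro rfl
      exact hα (add_tsub_cancel_of_le hle).symm
    · exact coeff_zero γ
  · intro h
    simp [notMem_support_iff.mp h]

theorem derivMulti_add (β : Fin r →₀ ℕ) (f g : MvPolynomial (Fin r) K) :
    derivMulti β (f + g) = derivMulti β f + derivMulti β g := by
  ext γ
  simp only [coeff_derivMulti, coeff_add, smul_add]

theorem derivMulti_smul (β : Fin r →₀ ℕ) (c : K) (f : MvPolynomial (Fin r) K) :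
    derivMulti β (c • f) = c • derivMulti β f := by
  ext γ
  simp only [coeff_derivMulti, coeff_smul, smul_comm c]

theorem derivMulti_derivMulti (β δ : Fin r →₀ ℕ) (f : MvPolynomial (Fin r) K) :
    derivMulti β (derivMulti δ f) = derivMulti (δ + β) f := by
  ext γ
  rw [coeff_derivMulti, coeff_derivMulti, coeff_derivMulti, smul_smul, ← Finset.prod_mul_distrib,
    add_assoc δ]
  congr 2 with i
  have h := Nat.descFactorial_mul_descFactorial (n := γ i + β i + δ i) (k := δ i)
    (m := δ i + β i) (Nat.le_add_right _ _)
  simp only [Nat.add_sub_cancel, Nat.add_sub_cancel_left] at h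
  simp only [Finsupp.add_apply, add_comm (β i) (γ i), h]
  congr 1
  omega

theorem contract_monomial (β : Fin r →₀ ℕ) (c : K) (f : MvPolynomial (Fin r) K) :
    contract (monomial β c) f = c • derivMulti β f := by
  classical
  rw [contract, support_monomial]
  split_ifs with hc
  · simp [hc]
  · rw [Finset.sum_singleton, coeff_monomial, if_pos rfl]

theorem contract_add_left (D E f : MvPolynomial (Fin r) K) :
    contract (D + E) f = contract D f + contract E f := by
  have hsum (P : MvPolynomial (Fin r) K) :
      contract P f = (AddMonoidAlgebra.coeff P).sum fun β c => c • derivMulti β f := rfl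
  rw [hsum, hsum, hsum, AddMonoidAlgebra.coeff_add]
  exact Finsupp.sum_add_index' (fun _ => zero_smul K _) (fun _ _ _ => add_smul _ _ _)

theorem contract_add_right (D f g : MvPolynomial (Fin r) K) :
    contract D (f + g) = contract D f + contract D g := by
  simp only [contract, derivMulti_add, smul_add, Finset.sum_add_distrib]

theorem contract_smul_right (c : K) (D f : MvPolynomial (Fin r) K) :
    contract D (c • f) = c • contract D f := by
  simp only [contract, derivMulti_smul, Finset.smul_sum, smul_comm c]

theorem contract_mul (D E f : MvPolynomial (Fin r) K) :
    contract (D * E) f = contract D (contract E f) := by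
  induction D using MvPolynomial.induction_on' with
  | add D₁ D₂ h₁ h₂ => rw [add_mul, contract_add_left, contract_add_left, h₁, h₂]
  | monomial β b =>
    induction E using MvPolynomial.induction_on' with
    | add E₁ E₂ h₁ h₂ =>
      rw [mul_add, contract_add_left, contract_add_left, contract_add_right, h₁, h₂]
    | monomial δ c =>
      rw [monomial_mul, contract_monomial, contract_monomial, contract_monomial,
        derivMulti_smul, derivMulti_derivMulti, smul_smul, add_comm β δ]

theorem contract_C (c : K) (f : MvPolynomial (Fin r) K) : contract (C c) f = c • f := by
  rw [C_apply, contract_monomial]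
  congr
  ext γ
  simp [coeff_derivMulti]

theorem contract_smul_left (c : K) (D f : MvPolynomial (Fin r) K) :
    contract (c • D) f = c • contract D f := by
  rw [smul_eq_C_mul, contract_mul, contract_C]

theorem contract_one (f : MvPolynomial (Fin r) K) : contract 1 f = f := by
  rw [← C_1, contract_C, one_smul]

theorem contract_X (i : Fin r) (f : MvPolynomial (Fin r) K) : contract (X i) f = pderiv i f := by
  classical
  ext γ
  rw [X, contract_monomial, one_smul, coeff_derivMulti, coeff_pderiv, add_comm _ γ,
    Finset.prod_eq_single i (fun j _ hj => by simp [Finsupp.single_eq_of_ne hj])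
      (by simp), nsmul_eq_mul, mul_comm]
  simp

noncomputable def contractBilin :
    MvPolynomial (Fin r) K →ₗ[K] MvPolynomial (Fin r) K →ₗ[K] MvPolynomial (Fin r) K :=
  LinearMap.mk₂ K contract contract_add_left contract_smul_left contract_add_right
    contract_smul_right

theorem contract_zero_left (f : MvPolynomial (Fin r) K) : contract 0 f = 0 :=
  map_zero (contractBilin.flip f)

theorem contract_zero_right (D : MvPolynomial (Fin r) K) : contract D 0 = 0 :=
  map_zero (contractBilin D)

theorem contract_sum_left {ι : Type*} (s : Finset ι) (D : ι → MvPolynomial (Fin r) K)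
    (f : MvPolynomial (Fin r) K) : contract (∑ x ∈ s, D x) f = ∑ x ∈ s, contract (D x) f :=
  map_sum (contractBilin.flip f) D s

theorem isHomogeneous_derivMulti {f : MvPolynomial (Fin r) K} {d : ℕ} (hf : f.IsHomogeneous d)
    (β : Fin r →₀ ℕ) : (derivMulti β f).IsHomogeneous (d - β.degree) := by
  intro γ hγ
  rw [coeff_derivMulti] at hγ
  have hβγ : (β + γ).degree = d :=
    not_not.mp fun h => right_ne_zero_of_smul hγ (hf.coeff_eq_zero h)
  rw [Pi.one_def, ← Finsupp.degree_eq_weight_one, ← hβγ, map_add, Nat.add_sub_cancel_left]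

theorem _root_.MvPolynomial.IsHomogeneous.contract {D f : MvPolynomial (Fin r) K} {e d : ℕ}
    (hD : D.IsHomogeneous e) (hf : f.IsHomogeneous d) : (contract D f).IsHomogeneous (d - e) := by
  refine IsHomogeneous.sum _ _ _ fun β hβ => ?_
  have hdeg : β.degree = e :=
    not_not.mp fun h => mem_support_iff.mp hβ (hD.coeff_eq_zero h)
  rw [smul_eq_C_mul, ← hdeg]
  exact (isHomogeneous_derivMulti hf β).C_mul _

theorem _root_.MvPolynomial.IsHomogeneous.eq_C_coeff_zero {σ : Type*} {p : MvPolynomial σ K}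
    (hp : p.IsHomogeneous 0) : p = C (coeff 0 p) :=
  totalDegree_eq_zero_iff_eq_C.mp ((totalDegree_zero_iff_isHomogeneous (p := p)).mpr hp)

theorem contract_eq_zero_of_coeff_zero {D f : MvPolynomial (Fin r) K} {d : ℕ}
    (hD : D.IsHomogeneous d) (hf : f.IsHomogeneous d) (h0 : coeff 0 (contract D f) = 0) :
    contract D f = 0 := by
  have h := hD.contract hf
  rw [Nat.sub_self] at h
  rw [h.eq_C_coeff_zero, h0, C_0]

theorem isHomogeneous_rowOp (A : Matrix (Fin r) (Fin r) K) (i : Fin r) :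
    (rowOp A i).IsHomogeneous 1 :=
  IsHomogeneous.sum _ _ _ fun k _ => by
    rw [smul_eq_C_mul]
    exact isHomogeneous_C_mul_X _ k

theorem rowOp_mul (A : Matrix (Fin r) (Fin r) K) (i : Fin r) (D : MvPolynomial (Fin r) K) :
    rowOp A i * D = ∑ k, A i k • (X k * D) := by
  simp only [rowOp, Finset.sum_mul, smul_mul_assoc]

end Contraction

theorem contract_sub_right {K : Type*} [CommRing K] {r : ℕ} (D f g : MvPolynomial (Fin r) K) :
    contract D (f - g) = contract D f - contract D g :=
  map_sub (contractBilin D) f g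

section Nondegenerate

variable {K : Type*} [Field K] [CharZero K] {r : ℕ}

theorem eq_zero_of_forall_contract_X_eq_zero {h : MvPolynomial (Fin r) K} {m : ℕ}
    (hh : h.IsHomogeneous m) (hm : m ≠ 0) (H : ∀ i, contract (X i) h = 0) : h = 0 := by
  have euler := hh.sum_X_mul_pderiv
  simp only [← contract_X, H, mul_zero, Finset.sum_const_zero] at euler
  exact (smul_eq_zero.mp euler.symm).resolve_left hm

theorem eq_zero_of_forall_contract_eq_zero {h : MvPolynomial (Fin r) K} {m k : ℕ}
    (hh : h.IsHomogeneous m) (hk : k ≤ m)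
    (H : ∀ E : MvPolynomial (Fin r) K, E.IsHomogeneous k → contract E h = 0) : h = 0 := by
  induction k generalizing h m with
  | zero => simpa only [contract_one] using H 1 (isHomogeneous_one _ _)
  | succ k ih =>
    refine eq_zero_of_forall_contract_X_eq_zero hh (by omega) fun i => ?_
    refine ih ((isHomogeneous_X K i).contract hh) (by omega) fun E hE => ?_
    rw [← contract_mul]
    exact H _ (hE.mul (isHomogeneous_X K i))

theorem eq_of_forall_coeff_contract_eq {p q : MvPolynomial (Fin r) K} {m : ℕ}
    (hp : p.IsHomogeneous m) (hq : q.IsHomogeneous m)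
    (H : ∀ E : MvPolynomial (Fin r) K, E.IsHomogeneous m →
      coeff 0 (contract E p) = coeff 0 (contract E q)) : p = q := by
  refine sub_eq_zero.mp (eq_zero_of_forall_contract_eq_zero (hp.sub hq) le_rfl fun E hE => ?_)
  refine contract_eq_zero_of_coeff_zero hE (hp.sub hq) ?_
  rw [contract_sub_right, coeff_sub, H E hE, sub_self]

end Nondegenerate

section Annihilator

variable {K : Type*} [CommSemiring K] {r : ℕ}

def annihilator (f : MvPolynomial (Fin r) K) : Ideal (MvPolynomial (Fin r) K) where
  carrier := {D | contract D f = 0}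
  add_mem' {D E} (hD : contract D f = 0) (hE : contract E f = 0) := by
    simp only [Set.mem_ofPred_eq, contract_add_left, hD, hE, add_zero]
  zero_mem' := contract_zero_left f
  smul_mem' E D (hD : contract D f = 0) := by
    simp only [Set.mem_ofPred_eq, smul_eq_mul, contract_mul, hD, contract_zero_right]

theorem span_setOf_contract_eq_zero (f : MvPolynomial (Fin r) K) :
    Ideal.span {D | contract D f = 0} = annihilator f :=
  Ideal.span_eq (annihilator f)

theorem span_X_mul_span_le_iff {f g : MvPolynomial (Fin r) K} :
    Ideal.span {p : MvPolynomial (Fin r) K | ∃ i, p = X i} *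
        Ideal.span {D : MvPolynomial (Fin r) K | contract D f = 0} ≤
      Ideal.span {D : MvPolynomial (Fin r) K | contract D g = 0} ↔
    ∀ D : MvPolynomial (Fin r) K, contract D f = 0 → ∀ i, contract (X i * D) g = 0 := by
  rw [span_setOf_contract_eq_zero g, Ideal.span_mul_span, Ideal.span_le]
  constructor
  · intro h D hD i
    exact h ⟨X i, ⟨i, rfl⟩, D, hD, rfl⟩
  · rintro h _ ⟨_, ⟨i, rfl⟩, D, hD, rfl⟩
    exact h D hD i

theorem contract_X_mul_eq_zero_of_exists_matrix {f g : MvPolynomial (Fin r) K}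
    (hc : ∃ A : Matrix (Fin r) (Fin r) K, ∀ i, contract (X i) g = contract (rowOp A i) f) :
    ∀ D : MvPolynomial (Fin r) K, contract D f = 0 → ∀ i, contract (X i * D) g = 0 := by
  obtain ⟨A, hA⟩ := hc
  intro D hD i
  rw [mul_comm, contract_mul, hA, ← contract_mul, mul_comm, contract_mul, hD,
    contract_zero_right]

end Annihilator

section Main

variable {K : Type*} [Field K] [CharZero K] {r d : ℕ} {f g : MvPolynomial (Fin r) K}

theorem ann_inclusion_of_pred (hg : g.IsHomogeneous d)
    (hb : ∀ D : MvPolynomial (Fin r) K, D.IsHomogeneous (d - 1) → contract D f = 0 →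
      contract D g = 0) :
    ∀ e < d, ∀ D : MvPolynomial (Fin r) K, D.IsHomogeneous e → contract D f = 0 →
      contract D g = 0 := by
  intro e he D hD hDf
  refine eq_zero_of_forall_contract_eq_zero (hD.contract hg) (k := d - 1 - e) (by omega)
    fun E hE => ?_
  rw [← contract_mul]
  refine hb _ ?_ (by rw [contract_mul, hDf, contract_zero_right])
  simpa only [show d - 1 - e + e = d - 1 by omega] using hE.mul hD

theorem ann_inclusion_pred_of_contract_X_mul (hd : 1 ≤ d) (hg : g.IsHomogeneous d)
    (h : ∀ D : MvPolynomial (Fin r) K, D.IsHomogeneous (d - 1) → contract D f = 0 →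
      ∀ i, contract (X i * D) g = 0) :
    ∀ D : MvPolynomial (Fin r) K, D.IsHomogeneous (d - 1) → contract D f = 0 →
      contract D g = 0 := by
  intro D hD hDf
  refine eq_zero_of_forall_contract_X_eq_zero (hD.contract hg) (by omega) fun i => ?_
  rw [← contract_mul]
  exact h D hD hDf i

theorem exists_matrix_of_ann_inclusion_pred (hd : 1 ≤ d) (hf : f.IsHomogeneous d)
    (hg : g.IsHomogeneous d)
    (hb : ∀ D : MvPolynomial (Fin r) K, D.IsHomogeneous (d - 1) → contract D f = 0 →
      contract D g = 0) :
    ∃ A : Matrix (Fin r) (Fin r) K, ∀ i, contract (X i) g = contract (rowOp A i) f := by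
  let V := homogeneousSubmodule (Fin r) K (d - 1)
  let ℓ (h : MvPolynomial (Fin r) K) (k : Fin r) : V →ₗ[K] K :=
    lcoeff K 0 ∘ₗ contractBilin.flip h ∘ₗ LinearMap.mulLeft K (X k) ∘ₗ V.subtype
  have hℓ (h : MvPolynomial (Fin r) K) (k : Fin r) (D : V) :
      ℓ h k D = coeff 0 (contract (X k * (D : MvPolynomial (Fin r) K)) h) := rfl
  have hker (i : Fin r) : ⨅ k, LinearMap.ker (ℓ f k) ≤ LinearMap.ker (ℓ g i) := by
    rintro ⟨D, hDV : D.IsHomogeneous (d - 1)⟩ hD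
    simp only [Submodule.mem_iInf, LinearMap.mem_ker, hℓ] at hD ⊢
    have hDf1 : (contract D f).IsHomogeneous 1 := by
      simpa only [show d - (d - 1) = 1 by omega] using hDV.contract hf
    have hDf : contract D f = 0 := by
      refine eq_zero_of_forall_contract_X_eq_zero hDf1 one_ne_zero fun k => ?_
      refine contract_eq_zero_of_coeff_zero (isHomogeneous_X K k) hDf1 ?_
      rw [← contract_mul]
      exact hD k
    rw [contract_mul, hb D hDV hDf, contract_zero_right, coeff_zero]
  choose A hA using fun i =>
    (Submodule.mem_span_range_iff_exists_fun K).mp (mem_span_of_iInf_ker_le_ker (hker i))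
  refine ⟨Matrix.of A, fun i => eq_of_forall_coeff_contract_eq ((isHomogeneous_X K i).contract hg)
    ((isHomogeneous_rowOp _ i).contract hf) fun E hE => ?_⟩
  have hAE := LinearMap.congr_fun (hA i) ⟨E, hE⟩
  simp only [LinearMap.sum_apply, LinearMap.smul_apply, hℓ, smul_eq_mul] at hAE
  rw [← contract_mul, ← contract_mul, mul_comm E, mul_comm E, rowOp_mul, contract_sum_left,
    coeff_sum, ← hAE]
  simp only [contract_smul_left, coeff_smul, Matrix.of_apply, smul_eq_mul]

end Main

/-- Lemma 2.7. For `d ≥ 1` and `f, g ∈ ℛ_d`, the following are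
equivalent: (a) `ann_R(f)_e ⊆ ann_R(g)_e` for all `e < d`;
(b) `ann_R(f)_{d−1} ⊆ ann_R(g)_{d−1}`;
(c) there is `A ∈ Mat_r(K)` with `∂g = A∂f`;
(d) `R_1·ann_R(f)_{d−1} ⊆ ann_R(g)_d`;
(e) `𝔪_R·ann_R(f) ⊆ ann_R(g)`. -/
theorem ann_inclusion_tfae {K : Type*} [Field K] [CharZero K] {r d : ℕ} (hd : 1 ≤ d)
    (f g : MvPolynomial (Fin r) K) (hf : f.IsHomogeneous d) (hg : g.IsHomogeneous d) :
    ((∀ e < d, ∀ D : MvPolynomial (Fin r) K, D.IsHomogeneous e → contract D f = 0 →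
        contract D g = 0) ↔
      (∀ D : MvPolynomial (Fin r) K, D.IsHomogeneous (d - 1) → contract D f = 0 →
        contract D g = 0)) ∧
    ((∀ D : MvPolynomial (Fin r) K, D.IsHomogeneous (d - 1) → contract D f = 0 →
        contract D g = 0) ↔
      (∃ A : Matrix (Fin r) (Fin r) K, ∀ i, contract (X i) g = contract (rowOp A i) f)) ∧
    ((∃ A : Matrix (Fin r) (Fin r) K, ∀ i, contract (X i) g = contract (rowOp A i) f) ↔
      (∀ D : MvPolynomial (Fin r) K, D.IsHomogeneous (d - 1) → contract D f = 0 →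
        ∀ i, contract (X i * D) g = 0)) ∧
    ((∀ D : MvPolynomial (Fin r) K, D.IsHomogeneous (d - 1) → contract D f = 0 →
        ∀ i, contract (X i * D) g = 0) ↔
      Ideal.span {p : MvPolynomial (Fin r) K | ∃ i, p = X i} *
          Ideal.span {D : MvPolynomial (Fin r) K | contract D f = 0} ≤
        Ideal.span {D : MvPolynomial (Fin r) K | contract D g = 0}) := by
  have hbc := exists_matrix_of_ann_inclusion_pred hd hf hg
  have hcm := contract_X_mul_eq_zero_of_exists_matrix (f := f) (g := g)
  have hdb := ann_inclusion_pred_of_contract_X_mul (f := f) hd hg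
  refine ⟨⟨fun ha => ha _ (by omega), ann_inclusion_of_pred hg⟩,
    ⟨hbc, fun hc => hdb fun D _ => hcm hc D⟩,
    ⟨fun hc D _ => hcm hc D, fun h => hbc (hdb h)⟩,
    ⟨fun h => span_X_mul_span_le_iff.mpr (hcm (hbc (hdb h))),
      fun he D _ => span_X_mul_span_le_iff.mp he D⟩⟩

end Kleppe
end

section
/- Let M ⊆ Mat_r(K) be a subset containing the identity matrix I, and let M' be the K-subalgebra of Mat_r(K) generated by M. Then I(M') = Ǐ(M). -/
open MvPolynomial

namespace Kleppe

/-- The determinantal ideal `I(M) = Σ_{A ∈ M} I_2(∂ A∂)`. -/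
noncomputable def IM {K : Type*} [CommRing K] {r : ℕ} (M : Set (Matrix (Fin r) (Fin r) K)) :
    Ideal (MvPolynomial (Fin r) K) :=
  Ideal.span {p | ∃ A ∈ M, ∃ i j : Fin r, p = X i * rowOp A j - X j * rowOp A i}

/-- The determinantal ideal `Ǐ(M) = Σ_{A,B ∈ M} I_2(A∂ B∂)`. -/
noncomputable def IcheckM {K : Type*} [CommRing K] {r : ℕ} (M : Set (Matrix (Fin r) (Fin r) K)) :
    Ideal (MvPolynomial (Fin r) K) :=
  Ideal.span {p | ∃ A ∈ M, ∃ B ∈ M, ∃ i j : Fin r,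
    p = rowOp A i * rowOp B j - rowOp A j * rowOp B i}

/-!
Work modulo an ideal `J` and put `P = ∂ ∂ᵀ`, a symmetric matrix over `R ⧸ J`. Then
`Ǐ(M) ⊆ J` says `A P Bᵀ = B P Aᵀ` for `A, B ∈ M`, and `I(M') ⊆ J` says `u P = P uᵀ` for
`u ∈ M'`. Since `I ∈ M`, the first condition gives `A P = P Aᵀ` and `A B P = B A P` on `M`;
both propagate to words in `M` by induction on the length (the second is what carries the
first: `A v P = v A P = P (A v)ᵀ`), and to `M'` by linearity. Conversely, if `B` and `A B`
satisfy `u P = P uᵀ`, then `A P Bᵀ = A B P = P (A B)ᵀ` is symmetric, i.e. equals `B P Aᵀ`.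
Hence `Ǐ(M)` and `I(M')` are contained in the same ideals.
-/

section MatrixIdentities

open Matrix

variable {R S n : Type*} [CommSemiring R] [CommRing S] [Algebra R S] [Fintype n]
  {P : Matrix n n S} {s : Set (Matrix n n S)}

theorem mul_mul_transpose_comm_of_mul_eq_mul_transpose (hP : Pᵀ = P) {a b : Matrix n n S}
    (hb : b * P = P * bᵀ) (hab : a * b * P = P * (a * b)ᵀ) : a * P * bᵀ = b * P * aᵀ := by
  have h : a * P * bᵀ = P * (a * b)ᵀ := by rw [mul_assoc a, ← hb, ← mul_assoc, hab]
  calc a * P * bᵀ = (a * b * P)ᵀ := by rw [h, transpose_mul (a * b), hP]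
    _ = (a * P * bᵀ)ᵀ := by rw [hab, h]
    _ = b * P * aᵀ := by rw [transpose_mul, transpose_mul, transpose_transpose, hP, mul_assoc]

variable [DecidableEq n]

theorem mul_eq_mul_transpose_of_mem_adjoin (h1 : 1 ∈ s)
    (hs : ∀ a ∈ s, ∀ b ∈ s, a * P * bᵀ = b * P * aᵀ) {u : Matrix n n S}
    (hu : u ∈ Algebra.adjoin R s) : u * P = P * uᵀ := by
  have hsP : ∀ a ∈ s, a * P = P * aᵀ := fun a ha => by simpa using hs a ha 1 h1
  have hcomm : ∀ a ∈ s, ∀ b ∈ s, a * b * P = b * a * P := fun a ha b hb => by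
    rw [mul_assoc, hsP b hb, ← mul_assoc, hs a ha b hb, mul_assoc, ← hsP a ha, ← mul_assoc]
  have hclosure : ∀ v ∈ Submonoid.closure s,
      v * P = P * vᵀ ∧ ∀ b ∈ s, v * b * P = b * v * P := by
    intro v hv
    induction hv using Submonoid.closure_induction_left with
    | one => simp
    | mul_left a ha v _ ih =>
      obtain ⟨hvP, hv⟩ := ih
      refine ⟨?_, fun b hb => ?_⟩
      · calc a * v * P = v * (a * P) := by rw [← hv a ha, mul_assoc]
          _ = P * (a * v)ᵀ := by rw [hsP a ha, ← mul_assoc, hvP, transpose_mul, mul_assoc]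
      · calc a * v * b * P = a * b * P * vᵀ := by
              rw [mul_assoc a, mul_assoc a, hv b hb, mul_assoc b, hvP]; simp only [mul_assoc]
          _ = b * (a * v) * P := by
              rw [hcomm a ha b hb, mul_assoc (b * a), ← hvP]; simp only [mul_assoc]
  have hspan : u ∈ Submodule.span R (Submonoid.closure s : Set (Matrix n n S)) := by
    rw [← Algebra.adjoin_eq_span]
    exact hu
  clear hu
  induction hspan using Submodule.span_induction with
  | mem v hv => exact (hclosure v hv).1
  | zero => simp
  | add v w _ _ hv hw => rw [add_mul, hv, hw, transpose_add, mul_add]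
  | smul c v _ hv => rw [smul_mul_assoc, hv, transpose_smul, mul_smul_comm]

theorem forall_mul_mul_transpose_comm_iff_forall_mem_adjoin (hP : Pᵀ = P) (h1 : 1 ∈ s) :
    (∀ a ∈ s, ∀ b ∈ s, a * P * bᵀ = b * P * aᵀ) ↔
      ∀ u ∈ Algebra.adjoin R s, u * P = P * uᵀ := by
  refine ⟨fun hs u hu => mul_eq_mul_transpose_of_mem_adjoin h1 hs hu, fun h a ha b hb => ?_⟩
  have ha' := Algebra.subset_adjoin (R := R) ha
  have hb' := Algebra.subset_adjoin (R := R) hb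
  exact mul_mul_transpose_comm_of_mul_eq_mul_transpose hP (h b hb') (h _ (mul_mem ha' hb'))

end MatrixIdentities

section Reduction

open Matrix

variable {K : Type*} [CommRing K] {r : ℕ} (J : Ideal (MvPolynomial (Fin r) K))

noncomputable def partialMod : Fin r → MvPolynomial (Fin r) K ⧸ J :=
  fun i => Ideal.Quotient.mk J (X i)

noncomputable def partialOuter : Matrix (Fin r) (Fin r) (MvPolynomial (Fin r) K ⧸ J) :=
  vecMulVec (partialMod J) (partialMod J)

lemma partialOuter_transpose : (partialOuter J)ᵀ = partialOuter J :=
  transpose_vecMulVec _ _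

noncomputable abbrev matrixMod :
    Matrix (Fin r) (Fin r) K →ₐ[K] Matrix (Fin r) (Fin r) (MvPolynomial (Fin r) K ⧸ J) :=
  (Algebra.ofId K _).mapMatrix

lemma rowOp_one (i : Fin r) : rowOp (1 : Matrix (Fin r) (Fin r) K) i = X i := by
  simp [rowOp, Matrix.one_apply]

lemma matrixMod_mulVec_partialMod (A : Matrix (Fin r) (Fin r) K) :
    matrixMod J A *ᵥ partialMod J = fun i => Ideal.Quotient.mk J (rowOp A i) := by
  ext i
  simp [mulVec, dotProduct, partialMod, rowOp, Algebra.smul_def,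
    ← Ideal.Quotient.mk_algebraMap]

lemma rowOp_minors_mem_iff (A B : Matrix (Fin r) (Fin r) K) :
    (∀ i j, rowOp A i * rowOp B j - rowOp A j * rowOp B i ∈ J) ↔
      matrixMod J A * partialOuter J * (matrixMod J B)ᵀ =
        matrixMod J B * partialOuter J * (matrixMod J A)ᵀ := by
  simp only [partialOuter, mul_vecMulVec, vecMulVec_mul, vecMul_transpose,
    matrixMod_mulVec_partialMod, ← Matrix.ext_iff, vecMulVec_apply, ← map_mul, Ideal.Quotient.eq,
    mul_comm (rowOp B _)]

lemma IcheckM_le_iff (M : Set (Matrix (Fin r) (Fin r) K)) :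
    IcheckM M ≤ J ↔ ∀ A ∈ M, ∀ B ∈ M,
      matrixMod J A * partialOuter J * (matrixMod J B)ᵀ =
        matrixMod J B * partialOuter J * (matrixMod J A)ᵀ := by
  rw [IcheckM, Ideal.span_le]
  refine ⟨fun h A hA B hB => (rowOp_minors_mem_iff J A B).1 fun i j =>
    h ⟨A, hA, B, hB, i, j, rfl⟩, ?_⟩
  rintro h _ ⟨A, hA, B, hB, i, j, rfl⟩
  exact (rowOp_minors_mem_iff J A B).2 (h A hA B hB) i j

lemma IM_le_iff (M : Set (Matrix (Fin r) (Fin r) K)) :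
    IM M ≤ J ↔ ∀ u ∈ M,
      matrixMod J u * partialOuter J = partialOuter J * (matrixMod J u)ᵀ := by
  have hgen (u : Matrix (Fin r) (Fin r) K) :
      (∀ i j, X i * rowOp u j - X j * rowOp u i ∈ J) ↔
        matrixMod J u * partialOuter J = partialOuter J * (matrixMod J u)ᵀ := by
    simpa [rowOp_one, eq_comm] using rowOp_minors_mem_iff J 1 u
  rw [IM, Ideal.span_le]
  refine ⟨fun h u hu => (hgen u).1 fun i j => h ⟨u, hu, i, j, rfl⟩, ?_⟩
  rintro h _ ⟨u, hu, i, j, rfl⟩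
  exact (hgen u).2 (h u hu) i j

end Reduction

/-- Proposition 2.20. If `I ∈ M ⊆ Mat_r(K)`, and `M'` is the
`K`-subalgebra of `Mat_r(K)` generated by `M`, then `I(M') = Ǐ(M)`. -/
theorem IM_adjoin_eq_IcheckM {K : Type*} [Field K] {r : ℕ}
    (M : Set (Matrix (Fin r) (Fin r) K)) (hM : (1 : Matrix (Fin r) (Fin r) K) ∈ M) :
    IM ((Algebra.adjoin K M : Subalgebra K (Matrix (Fin r) (Fin r) K)) : Set _) =
      IcheckM M := by
  refine eq_of_forall_ge_iff fun J => ?_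
  have h1 : 1 ∈ matrixMod J '' M := ⟨1, hM, map_one _⟩
  have key := forall_mul_mul_transpose_comm_iff_forall_mem_adjoin (R := K)
    (partialOuter_transpose J) h1
  rw [← AlgHom.map_adjoin] at key
  simp only [Set.forall_mem_image, Subalgebra.mem_map, forall_exists_index, and_imp,
    forall_apply_eq_imp_iff₂] at key
  rw [IM_le_iff, IcheckM_le_iff]
  exact key.symm

end Kleppe
end
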